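/- Fix an integer $i \ge 0$. Then every $x \in E^\times$ belongs to the double coset $\mathbb{Q}_p^\times\, y\, \mathcal{O}_{E,i}^\times$ for exactly one element $y$ of the following list: $y = 1 + b\theta$ with $b$ ranging over a complete set of representatives of $\mathbb{Z}_p/p^i\mathbb{Z}_p$, or $y = ap + \theta$ with $a$ ranging over a complete set of representatives of $\mathbb{Z}_p/p^i\mathbb{Z}_p$ (the double coset of $y$ depending only on the residue class of $b$, respectively $a$). -/

import Mathlib

open scoped Classical

namespace ArakawaQuad

variable (p : ℕ) [Fact p.Prime]
variable (E : Type*) [Field E] [Algebra ℚ_[p] E] [Algebra ℤ_[p] E]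
  [IsScalarTower ℤ_[p] ℚ_[p] E]

/-- Membership in `𝒪_{E,i} = ℤ_p + p^i 𝒪_E`, where `𝒪_E` is the ring of integers
(the integral closure of `ℤ_p` in `E`). -/
def MemOEi (i : ℕ) (z : E) : Prop :=
  ∃ a : ℤ_[p], ∃ w ∈ integralClosure ℤ_[p] E, z = algebraMap ℤ_[p] E a + (p : E) ^ i * w

/-- Membership of a unit `u ∈ Eˣ` in `𝒪_{E,i}^× = 𝒪_{E,i} ∩ 𝒪_E^×`. -/
def MemOEiUnits (i : ℕ) (u : Eˣ) : Prop :=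
  MemOEi p E i ↑u ∧ (↑u : E) ∈ integralClosure ℤ_[p] E ∧
    ((↑u⁻¹ : E) ∈ integralClosure ℤ_[p] E)

/-- `χ : E^× → ℂ^×` is trivial on `ℚ_p^×`. -/
def TrivialOnQp (χ : Eˣ →* ℂˣ) : Prop :=
  ∀ t : ℚ_[p]ˣ, χ (Units.map (algebraMap ℚ_[p] E).toMonoidHom t) = 1

/-- `χ` has conductor exponent `n`: it is trivial on `𝒪_{E,n}^×` and, when `n > 0`,
nontrivial on `𝒪_{E,n-1}^×`. -/
def CondExp (χ : Eˣ →* ℂˣ) (n : ℕ) : Prop :=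
  (∀ u : Eˣ, MemOEiUnits p E n u → χ u = 1) ∧
  (0 < n → ∃ u : Eˣ, MemOEiUnits p E (n - 1) u ∧ χ u ≠ 1)

/-- The value of `χ : E^× → ℂ^×` at an element of `E`, with junk value `0` at `0`. -/
noncomputable def chiV {F : Type*} [Field F] (χ : Fˣ →* ℂˣ) (z : F) : ℂ :=
  if h : z ≠ 0 then (χ (Units.mk0 z h) : ℂ) else 0

/-- `E` is an unramified quadratic extension of `ℚ_p`: it has degree `2` and the
maximal ideal of its ring of integers `𝒪_E` is `p 𝒪_E` (an element of `𝒪_E` is a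
unit of `𝒪_E` if and only if it does not lie in `p 𝒪_E`). -/
def Unramified : Prop :=
  Module.finrank ℚ_[p] E = 2 ∧
  ∀ z ∈ integralClosure ℤ_[p] E,
    ((∃ w ∈ integralClosure ℤ_[p] E, z * w = 1) ↔
      ¬ ∃ w ∈ integralClosure ℤ_[p] E, z = (p : E) * w)

/-- `E` is a ramified quadratic extension of `ℚ_p` with maximal ideal `𝔭 = θ 𝒪_E`
satisfying `𝔭² = p 𝒪_E`: it has degree `2`, `θ ∈ 𝒪_E` generates the maximal ideal
(an element of `𝒪_E` is a unit of `𝒪_E` iff it is not in `θ 𝒪_E`), and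
`θ² = p u` for a unit `u` of `𝒪_E`. -/
def Ramified (θ : E) : Prop :=
  Module.finrank ℚ_[p] E = 2 ∧
  θ ∈ integralClosure ℤ_[p] E ∧
  (∀ z ∈ integralClosure ℤ_[p] E,
    ((∃ w ∈ integralClosure ℤ_[p] E, z * w = 1) ↔
      ¬ ∃ w ∈ integralClosure ℤ_[p] E, z = θ * w)) ∧
  (∃ u ∈ integralClosure ℤ_[p] E,
    (∃ v ∈ integralClosure ℤ_[p] E, u * v = 1) ∧ θ ^ 2 = (p : E) * u)

/-- `{1, θ}` is a `ℤ_p`-basis of the ring of integers `𝒪_E`. -/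
def IsIntBasis (θ : E) : Prop :=
  θ ∈ integralClosure ℤ_[p] E ∧
  ∀ z ∈ integralClosure ℤ_[p] E, ∃! ab : ℤ_[p] × ℤ_[p],
    z = algebraMap ℤ_[p] E ab.1 + algebraMap ℤ_[p] E ab.2 * θ

/-- `x` lies in the double coset `ℚ_p^× y 𝒪_{E,i}^×` inside `E^×`. -/
def InCoset (i : ℕ) (y x : E) : Prop :=
  ∃ t : ℚ_[p]ˣ, ∃ u : Eˣ, MemOEiUnits p E i u ∧
    x = algebraMap ℚ_[p] E ↑t * y * ↑u

/-- The unit group `𝒪_E^×`, as a subgroup of `E^×`. -/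
def OEUnits : Subgroup Eˣ where
  carrier := {u | (↑u : E) ∈ integralClosure ℤ_[p] E ∧
    ((↑u⁻¹ : E) ∈ integralClosure ℤ_[p] E)}
  one_mem' := ⟨by simpa using (integralClosure ℤ_[p] E).one_mem,
    by simpa using (integralClosure ℤ_[p] E).one_mem⟩
  mul_mem' := by
    rintro a b ⟨ha1, ha2⟩ ⟨hb1, hb2⟩
    refine ⟨?_, ?_⟩
    · simpa [Units.val_mul] using mul_mem ha1 hb1
    · simpa [Units.val_mul, mul_inv_rev] using mul_mem hb2 ha2
  inv_mem' := by
    rintro a ⟨h1, h2⟩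
    exact ⟨h2, by simpa using h1⟩

end ArakawaQuad

open ArakawaQuad

/-!
In the `ℤ_p`-basis `{1, θ}` of `𝒪_E`, an element `x ≠ 0` is, up to `ℚ_p^×`, `1 + bθ` or `ap + θ`
according to which coordinate has the smaller valuation. A unit `α + pⁱw` of `𝒪_{E,i}` acts on
`𝒪_E` as the scalar `α` modulo `pⁱ 𝒪_E`, and since `ℤ_p` is integrally closed, a scalar relating
two units of `𝒪_E` lies in `ℤ_p`. So two units of `𝒪_E` in the same double coset have coordinate
vectors whose determinant vanishes modulo `pⁱ`; for `1 + bθ` and `1 + b'θ` it is `b' - b`.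
Multiplying by `θ / p` turns `ap + θ` into the unit `u + aθ`, where `θ² = p u`, and the same
argument applies. The two families never meet: that would put `t²` in `p 𝒪_E^×` for some
`t ∈ ℚ_p`, whereas `‖t‖²` is an even power of `p`.
-/

section Padic

variable {p : ℕ} [Fact p.Prime]

theorem PadicInt.isUnit_or_natCast_dvd (z : ℤ_[p]) : IsUnit z ∨ (p : ℤ_[p]) ∣ z := by
  rw [PadicInt.isUnit_iff, ← PadicInt.norm_lt_one_iff_dvd]
  exact z.norm_le_one.eq_or_lt

theorem Padic.norm_sq_ne_norm_p (t : ℚ_[p]) : ‖t‖ ^ 2 ≠ ‖(p : ℚ_[p])‖ := by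
  have hp : (1 : ℝ) < p := by exact_mod_cast (Fact.out : p.Prime).one_lt
  rcases eq_or_ne t 0 with rfl | ht
  · simp [Padic.norm_p, (zero_lt_one.trans hp).ne]
  rw [Padic.norm_eq_zpow_neg_valuation ht, Padic.norm_p, ← zpow_natCast, ← zpow_mul,
    ← zpow_neg_one, Ne, zpow_right_inj₀ (by positivity) hp.ne']
  omega

theorem Padic.exists_units_mul_eq {r s : ℚ_[p]} (h : r ≠ 0 ∨ s ≠ 0) :
    ∃ t : ℚ_[p]ˣ, (∃ b : ℤ_[p], r = t ∧ s = t * b) ∨ (∃ a : ℤ_[p], r = t * (a * p) ∧ s = t) := by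
  rcases le_or_gt ‖s‖ ‖r‖ with hsr | hrs
  · have hr : r ≠ 0 := by rintro rfl; simp_all
    refine ⟨Units.mk0 r hr, Or.inl ⟨⟨s / r, ?_⟩, rfl, ?_⟩⟩
    · rw [norm_div]; exact div_le_one_of_le₀ hsr (norm_nonneg _)
    · simp [mul_div_cancel₀ _ hr]
  · have hs : s ≠ 0 := by rintro rfl; exact (norm_nonneg r).not_gt (by simpa using hrs)
    have hrs' : ‖r / s‖ < 1 := by rwa [norm_div, div_lt_one (norm_pos_iff.mpr hs)]
    obtain ⟨a, ha⟩ := (PadicInt.norm_lt_one_iff_dvd ⟨r / s, hrs'.le⟩).mp hrs'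
    refine ⟨Units.mk0 s hs, Or.inr ⟨a, ?_, rfl⟩⟩
    have := congrArg ((↑) : ℤ_[p] → ℚ_[p]) ha
    simp only [PadicInt.coe_mul, PadicInt.coe_natCast] at this
    rw [Units.val_mk0, mul_comm (a : ℚ_[p]), ← this, mul_div_cancel₀ _ hs]

end Padic

namespace ArakawaQuad

variable {p : ℕ} [Fact p.Prime] {E : Type*} [Field E]

local notation "𝒪" => integralClosure ℤ_[p] E

theorem prime_natCast_ne_zero [Algebra ℚ_[p] E] : (p : E) ≠ 0 := by
  simpa using (map_ne_zero (algebraMap ℚ_[p] E)).mpr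
    (Nat.cast_ne_zero.mpr (Fact.out : p.Prime).ne_zero)

variable [Algebra ℤ_[p] E] {θ : E} {i : ℕ}

-- `z ≠ 0` is needed because `0⁻¹ = 0`.
variable (p) in
def IsIntegralUnit (z : E) : Prop := z ≠ 0 ∧ z ∈ 𝒪 ∧ z⁻¹ ∈ 𝒪

theorem isIntegralUnit_iff_exists_mul_eq_one {z : E} (hz : z ∈ 𝒪) :
    IsIntegralUnit p z ↔ ∃ w ∈ 𝒪, z * w = 1 :=
  ⟨fun h => ⟨z⁻¹, h.2.2, mul_inv_cancel₀ h.1⟩, fun ⟨_, hw, h⟩ =>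
    ⟨left_ne_zero_of_mul_eq_one h, hz, inv_eq_of_mul_eq_one_right h ▸ hw⟩⟩

theorem IsIntegralUnit.mul {z z' : E} (hz : IsIntegralUnit p z) (hz' : IsIntegralUnit p z') :
    IsIntegralUnit p (z * z') :=
  ⟨mul_ne_zero hz.1 hz'.1, mul_mem hz.2.1 hz'.2.1, mul_inv z z' ▸ mul_mem hz.2.2 hz'.2.2⟩

theorem IsIntegralUnit.inv {z : E} (hz : IsIntegralUnit p z) : IsIntegralUnit p z⁻¹ :=
  ⟨inv_ne_zero hz.1, hz.2.2, (inv_inv z).symm ▸ hz.2.1⟩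

theorem IsIntegralUnit.pow {z : E} (hz : IsIntegralUnit p z) (n : ℕ) :
    IsIntegralUnit p (z ^ n) :=
  ⟨pow_ne_zero n hz.1, pow_mem hz.2.1 n, inv_pow z n ▸ pow_mem hz.2.2 n⟩

theorem isIntegralUnit_algebraMap {r : ℤ_[p]} (hr : IsUnit r) :
    IsIntegralUnit p (algebraMap ℤ_[p] E r) := by
  obtain ⟨r, rfl⟩ := hr
  refine (isIntegralUnit_iff_exists_mul_eq_one ((𝒪).algebraMap_mem _)).mpr
    ⟨algebraMap ℤ_[p] E ↑r⁻¹, (𝒪).algebraMap_mem _, ?_⟩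
  rw [← map_mul, r.mul_inv, map_one]

theorem MemOEi.mul {z z' : E} (hz : MemOEi p E i z) (hz' : MemOEi p E i z') :
    MemOEi p E i (z * z') := by
  obtain ⟨a, w, hw, rfl⟩ := hz
  obtain ⟨a', w', hw', rfl⟩ := hz'
  refine ⟨a * a', algebraMap ℤ_[p] E a * w' + algebraMap ℤ_[p] E a' * w + (p : E) ^ i * (w * w'),
    ?_, by rw [map_mul]; ring⟩
  have ha := (𝒪).algebraMap_mem a
  have ha' := (𝒪).algebraMap_mem a'
  exact add_mem (add_mem (mul_mem ha hw') (mul_mem ha' hw))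
    (mul_mem (pow_mem (natCast_mem _ p) _) (mul_mem hw hw'))

theorem MemOEiUnits.one : MemOEiUnits p E i 1 :=
  ⟨⟨1, 0, zero_mem _, by simp⟩, by simp [one_mem], by simp [one_mem]⟩

theorem MemOEiUnits.mul {u v : Eˣ} (hu : MemOEiUnits p E i u) (hv : MemOEiUnits p E i v) :
    MemOEiUnits p E i (u * v) :=
  ⟨hu.1.mul hv.1, mul_mem hu.2.1 hv.2.1, by simpa [mul_comm] using mul_mem hu.2.2 hv.2.2⟩

theorem IsIntBasis.coeff_eq (hθ : IsIntBasis p E θ) {r s r' s' : ℤ_[p]}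
    (h : algebraMap ℤ_[p] E r + algebraMap ℤ_[p] E s * θ =
      algebraMap ℤ_[p] E r' + algebraMap ℤ_[p] E s' * θ) : r = r' ∧ s = s' :=
  Prod.mk.inj <| (hθ.2 _ (add_mem ((𝒪).algebraMap_mem r)
    (mul_mem ((𝒪).algebraMap_mem s) hθ.1))).unique (y₁ := (r, s)) rfl h

theorem IsIntBasis.theta_ne_zero (hθ : IsIntBasis p E θ) : θ ≠ 0 := fun h =>
  one_ne_zero (hθ.coeff_eq (r := 0) (s := 1) (r' := 0) (s' := 0) (by simp [h])).2

theorem IsIntBasis.pow_dvd_det (hθ : IsIntBasis p E θ) {r s r' s' α : ℤ_[p]} {w : E}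
    (hw : w ∈ 𝒪) (h : algebraMap ℤ_[p] E r' + algebraMap ℤ_[p] E s' * θ =
      algebraMap ℤ_[p] E α * (algebraMap ℤ_[p] E r + algebraMap ℤ_[p] E s * θ) +
        (p : E) ^ i * w) :
    (p : ℤ_[p]) ^ i ∣ r * s' - r' * s := by
  obtain ⟨⟨w₀, w₁⟩, rfl, -⟩ := hθ.2 w hw
  obtain ⟨hr, hs⟩ := hθ.coeff_eq (r := r') (s := s') (r' := α * r + p ^ i * w₀)
      (s' := α * s + p ^ i * w₁) <| by
    simp only [map_add, map_mul, map_pow, map_natCast]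
    linear_combination h
  exact ⟨r * w₁ - w₀ * s, by rw [hr, hs]; ring⟩

theorem mul_add_theta_mul_theta {u₁ u₂ : ℤ_[p]}
    (hθu : θ ^ 2 = p * (algebraMap ℤ_[p] E u₁ + algebraMap ℤ_[p] E u₂ * θ)) (a : ℤ_[p]) :
    (algebraMap ℤ_[p] E a * p + θ) * θ =
      (algebraMap ℤ_[p] E u₁ + algebraMap ℤ_[p] E (u₂ + a) * θ) * p := by
  rw [map_add]
  linear_combination hθu

section Rational

variable [Algebra ℚ_[p] E]

theorem Ramified.isIntegralUnit_iff (hE : Ramified p E θ) {z : E} (hz : z ∈ 𝒪) :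
    IsIntegralUnit p z ↔ ¬ ∃ w ∈ 𝒪, z = θ * w :=
  (isIntegralUnit_iff_exists_mul_eq_one hz).trans (hE.2.2.1 z hz)

theorem Ramified.isIntegralUnit_add_mul_theta (hE : Ramified p E θ) {z w : E}
    (hz : IsIntegralUnit p z) (hw : w ∈ 𝒪) : IsIntegralUnit p (z + w * θ) := by
  rw [hE.isIntegralUnit_iff (add_mem hz.2.1 (mul_mem hw hE.2.1))]
  rintro ⟨w', hw', h⟩
  exact (hE.isIntegralUnit_iff hz.2.1).mp hz ⟨w' - w, sub_mem hw' hw, by linear_combination h⟩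

theorem Ramified.isIntegralUnit_one_add_mul_theta (hE : Ramified p E θ) (b : ℤ_[p]) :
    IsIntegralUnit p (1 + algebraMap ℤ_[p] E b * θ) := by
  simpa using hE.isIntegralUnit_add_mul_theta (isIntegralUnit_algebraMap (E := E) isUnit_one)
    ((𝒪).algebraMap_mem b)

theorem Ramified.exists_theta_sq_eq (hE : Ramified p E θ) (hθ : IsIntBasis p E θ) :
    ∃ u₁ u₂ : ℤ_[p], IsUnit u₁ ∧
      θ ^ 2 = p * (algebraMap ℤ_[p] E u₁ + algebraMap ℤ_[p] E u₂ * θ) := by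
  obtain ⟨-, hθO, hcrit, u, hu, ⟨v, hv, huv⟩, hθu⟩ := hE
  obtain ⟨⟨u₁, u₂⟩, rfl, -⟩ := hθ.2 u hu
  refine ⟨u₁, u₂, (PadicInt.isUnit_or_natCast_dvd u₁).resolve_right ?_, hθu⟩
  rintro ⟨c, rfl⟩
  refine (hcrit _ hu).mp ⟨v, hv, huv⟩ ⟨θ * v * algebraMap ℤ_[p] E c + algebraMap ℤ_[p] E u₂,
    add_mem (mul_mem (mul_mem hθO hv) ((𝒪).algebraMap_mem c)) ((𝒪).algebraMap_mem u₂), ?_⟩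
  simp only [map_mul, map_natCast] at hθu huv ⊢
  linear_combination (-(v * algebraMap ℤ_[p] E c)) * hθu - (p * algebraMap ℤ_[p] E c) * huv

theorem InCoset.mul_right {y x : E} (c : E) (h : InCoset p E i y x) :
    InCoset p E i (y * c) (x * c) := by
  obtain ⟨t, u, hu, rfl⟩ := h
  exact ⟨t, u, hu, by ring⟩

theorem inCoset_mul_right_iff {y x c : E} (hc : c ≠ 0) :
    InCoset p E i (y * c) (x * c) ↔ InCoset p E i y x :=
  ⟨fun h => by simpa [hc] using h.mul_right c⁻¹, InCoset.mul_right c⟩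

theorem InCoset.trans {y x z : E} (h : InCoset p E i y x) (h' : InCoset p E i x z) :
    InCoset p E i y z := by
  obtain ⟨t, u, hu, rfl⟩ := h
  obtain ⟨t', u', hu', rfl⟩ := h'
  exact ⟨t' * t, u * u', hu.mul hu', by push_cast [map_mul]; ring⟩

theorem inCoset_of_eq_add {z z' w : E} (hz : IsIntegralUnit p z) (hz' : IsIntegralUnit p z')
    (hw : w ∈ 𝒪) (h : z' = z + p ^ i * w) : InCoset p E i z z' := by
  refine ⟨1, Units.mk0 (z' * z⁻¹) (mul_ne_zero hz'.1 (inv_ne_zero hz.1)),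
    ⟨⟨1, w * z⁻¹, mul_mem hw hz.2.2, ?_⟩, mul_mem hz'.2.1 hz.2.2, ?_⟩, ?_⟩
  · rw [Units.val_mk0, h, map_one]
    field_simp [hz.1]
  · simpa [mul_comm] using mul_mem hz.2.1 hz'.2.2
  · rw [Units.val_mk0, Units.val_one, map_one]
    field_simp [hz.1]

end Rational

section Tower

variable [Algebra ℚ_[p] E] [IsScalarTower ℤ_[p] ℚ_[p] E]

theorem algebraMap_padicInt_eq (z : ℤ_[p]) :
    algebraMap ℚ_[p] E z = algebraMap ℤ_[p] E z :=
  (IsScalarTower.algebraMap_apply ℤ_[p] ℚ_[p] E z).symm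

theorem algebraMap_mem_integralClosure_iff (q : ℚ_[p]) :
    algebraMap ℚ_[p] E q ∈ 𝒪 ↔ ‖q‖ ≤ 1 := by
  rw [mem_integralClosure_iff, ← IsScalarTower.toAlgHom_apply ℤ_[p],
    isIntegral_algHom_iff _ (algebraMap ℚ_[p] E).injective, IsIntegrallyClosed.isIntegral_iff]
  exact ⟨fun ⟨z, hz⟩ => hz ▸ z.norm_le_one, fun hq => ⟨⟨q, hq⟩, rfl⟩⟩

theorem inv_natCast_notMem_integralClosure : (p : E)⁻¹ ∉ 𝒪 := by
  rw [← map_natCast (algebraMap ℚ_[p] E), ← map_inv₀, algebraMap_mem_integralClosure_iff,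
    norm_inv, Padic.norm_p, inv_inv, not_le]
  exact_mod_cast (Fact.out : p.Prime).one_lt

theorem MemOEiUnits.inv {u : Eˣ} (hu : MemOEiUnits p E i u) : MemOEiUnits p E i u⁻¹ := by
  obtain ⟨⟨a, w, hw, hua⟩, hO, hO'⟩ := hu
  refine ⟨?_, hO', by simpa using hO⟩
  have h1 : (u : E) * ↑u⁻¹ = 1 := u.mul_inv
  cases i with
  | zero => exact ⟨0, _, hO', by simp⟩
  | succ k =>
    rcases PadicInt.isUnit_or_natCast_dvd a with ⟨a, rfl⟩ | ⟨c, rfl⟩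
    · refine ⟨↑a⁻¹, -(algebraMap ℤ_[p] E ↑a⁻¹ * w * ↑u⁻¹), ?_, ?_⟩
      · exact neg_mem (mul_mem (mul_mem ((𝒪).algebraMap_mem _) hw) hO')
      · have h2 : algebraMap ℤ_[p] E ↑a * algebraMap ℤ_[p] E ↑a⁻¹ = 1 := by
          rw [← map_mul, a.mul_inv, map_one]
        linear_combination (-(algebraMap ℤ_[p] E ↑a⁻¹) * ↑u⁻¹) * hua +
          algebraMap ℤ_[p] E ↑a⁻¹ * h1 - (↑u⁻¹ : E) * h2
    · -- `u ∈ p 𝒪` would make `p` a unit of `𝒪`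
      refine absurd ?_ (inv_natCast_notMem_integralClosure (p := p) (E := E))
      have hp : (p : E) * ((algebraMap ℤ_[p] E c + (p : E) ^ k * w) * ↑u⁻¹) = 1 := by
        rw [map_mul, map_natCast] at hua
        linear_combination (-(↑u⁻¹ : E)) * hua + h1
      rw [inv_eq_of_mul_eq_one_right hp]
      exact mul_mem (add_mem ((𝒪).algebraMap_mem c)
        (mul_mem (pow_mem (natCast_mem _ p) _) hw)) hO'

theorem InCoset.symm {y x : E} (h : InCoset p E i y x) : InCoset p E i x y := by
  obtain ⟨t, u, hu, rfl⟩ := h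
  refine ⟨t⁻¹, u⁻¹, hu.inv, ?_⟩
  simp only [Units.val_inv_eq_inv_val, map_inv₀]
  field_simp [t.ne_zero, u.ne_zero]

theorem InCoset.iff_of_inCoset {y y' x : E} (h : InCoset p E i y y') :
    InCoset p E i y x ↔ InCoset p E i y' x :=
  ⟨h.symm.trans, h.trans⟩

theorem IsIntBasis.pow_dvd_det_of_inCoset (hθ : IsIntBasis p E θ) {r s r' s' : ℤ_[p]}
    (hz : IsIntegralUnit p (algebraMap ℤ_[p] E r + algebraMap ℤ_[p] E s * θ))
    (h : InCoset p E i (algebraMap ℤ_[p] E r + algebraMap ℤ_[p] E s * θ)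
      (algebraMap ℤ_[p] E r' + algebraMap ℤ_[p] E s' * θ)) :
    (p : ℤ_[p]) ^ i ∣ r * s' - r' * s := by
  obtain ⟨t, v, ⟨⟨α, w, hw, hv⟩, -, hvO'⟩, heq⟩ := h
  set z := algebraMap ℤ_[p] E r + algebraMap ℤ_[p] E s * θ
  have hz'O : algebraMap ℤ_[p] E r' + algebraMap ℤ_[p] E s' * θ ∈ 𝒪 :=
    add_mem ((𝒪).algebraMap_mem r') (mul_mem ((𝒪).algebraMap_mem s') hθ.1)
  have htO : algebraMap ℚ_[p] E t ∈ 𝒪 := by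
    convert mul_mem (mul_mem hz'O hvO') hz.2.2 using 1
    rw [heq, Units.val_inv_eq_inv_val]
    field_simp [hz.1, v.ne_zero]
  obtain ⟨c, hc⟩ : ∃ c : ℤ_[p], (c : ℚ_[p]) = t :=
    ⟨⟨t, (algebraMap_mem_integralClosure_iff _).mp htO⟩, rfl⟩
  refine hθ.pow_dvd_det (α := c * α) (w := algebraMap ℤ_[p] E c * z * w)
    (mul_mem (mul_mem ((𝒪).algebraMap_mem c) hz.2.1) hw) ?_
  rw [heq, hv, ← hc, algebraMap_padicInt_eq, map_mul]
  ring

theorem algebraMap_sq_ne_natCast_mul {e : E} (he : IsIntegralUnit p e) (t : ℚ_[p]) :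
    algebraMap ℚ_[p] E t ^ 2 ≠ p * e := by
  intro h
  have hp : (p : ℚ_[p]) ≠ 0 := Nat.cast_ne_zero.mpr (Fact.out : p.Prime).ne_zero
  have ht : t ≠ 0 := by rintro rfl; simp [he.1, prime_natCast_ne_zero] at h
  have h₁ : algebraMap ℚ_[p] E (t ^ 2 / p) = e := by
    rw [map_div₀, map_pow, map_natCast, h]
    field_simp [prime_natCast_ne_zero]
  have h₂ : algebraMap ℚ_[p] E (p / t ^ 2) = e⁻¹ := by
    rw [map_div₀, map_pow, map_natCast, h]
    field_simp [prime_natCast_ne_zero, he.1]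
  have n₁ := (algebraMap_mem_integralClosure_iff _).mp (h₁ ▸ he.2.1)
  have n₂ := (algebraMap_mem_integralClosure_iff _).mp (h₂ ▸ he.2.2)
  rw [norm_div, norm_pow, div_le_one (norm_pos_iff.mpr hp)] at n₁
  rw [norm_div, norm_pow, div_le_one (by positivity)] at n₂
  exact Padic.norm_sq_ne_norm_p t (le_antisymm n₁ n₂)

theorem Ramified.not_inCoset_mul_theta_mul_natCast (hE : Ramified p E θ) {z m : E}
    (hz : IsIntegralUnit p z) (hm : IsIntegralUnit p m) :
    ¬ InCoset p E i (z * θ) (m * p) := by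
  rintro ⟨t, v, ⟨-, hvO, hvO'⟩, heq⟩
  obtain ⟨-, -, -, u, huO, huv, hθu⟩ := hE
  have hu : IsIntegralUnit p u := (isIntegralUnit_iff_exists_mul_eq_one huO).mpr huv
  have hv : IsIntegralUnit p (v : E) := ⟨v.ne_zero, hvO, by simpa using hvO'⟩
  -- squaring `m p = t z θ v` and using `θ² = p u` shows `t² ∈ p 𝒪^×`
  have hd := (hz.pow 2).mul (hu.mul (hv.pow 2))
  refine algebraMap_sq_ne_natCast_mul ((hm.pow 2).mul hd.inv) t ?_
  have key : (p : E) * (algebraMap ℚ_[p] E t ^ 2 * (z ^ 2 * (u * v ^ 2))) =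
      p * (p * m ^ 2) := by
    linear_combination (-(m * p + algebraMap ℚ_[p] E t * (z * θ) * v)) * heq -
      (algebraMap ℚ_[p] E t ^ 2 * z ^ 2 * v ^ 2) * hθu
  rw [← mul_assoc, ← div_eq_mul_inv, eq_div_iff hd.1]
  exact mul_left_cancel₀ prime_natCast_ne_zero key

theorem IsIntBasis.linearIndependent (hθ : IsIntBasis p E θ) :
    LinearIndependent ℚ_[p] ![1, θ] := by
  rw [LinearIndependent.pair_iff' one_ne_zero]
  intro r hr
  rw [← Algebra.algebraMap_eq_smul_one] at hr
  obtain ⟨c, rfl⟩ : ∃ c : ℤ_[p], (c : ℚ_[p]) = r :=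
    ⟨⟨r, (algebraMap_mem_integralClosure_iff r).mp (hr ▸ hθ.1)⟩, rfl⟩
  rw [algebraMap_padicInt_eq] at hr
  exact zero_ne_one (hθ.coeff_eq (r := c) (s := 0) (r' := 0) (s' := 1) (by simp [hr])).2

theorem IsIntBasis.exists_eq_algebraMap_add_mul (hθ : IsIntBasis p E θ)
    (hrank : Module.finrank ℚ_[p] E = 2) (x : E) :
    ∃ r s : ℚ_[p], x = algebraMap ℚ_[p] E r + algebraMap ℚ_[p] E s * θ := by
  have hspan := hθ.linearIndependent.span_eq_top_of_card_eq_finrank (by simp [hrank])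
  have hx : x ∈ Submodule.span ℚ_[p] (Set.range ![1, θ]) := hspan ▸ Submodule.mem_top
  simp only [Matrix.range_cons, Matrix.range_empty, Set.union_empty, Set.singleton_union] at hx
  obtain ⟨r, s, h⟩ := Submodule.mem_span_pair.mp hx
  exact ⟨r, s, by rw [← h, Algebra.smul_def, Algebra.smul_def, mul_one]⟩

theorem IsIntBasis.exists_inCoset (hθ : IsIntBasis p E θ) (hrank : Module.finrank ℚ_[p] E = 2)
    {x : E} (hx : x ≠ 0) :
    (∃ b : ℤ_[p], InCoset p E i (1 + algebraMap ℤ_[p] E b * θ) x) ∨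
      (∃ a : ℤ_[p], InCoset p E i (algebraMap ℤ_[p] E a * p + θ) x) := by
  obtain ⟨r, s, rfl⟩ := hθ.exists_eq_algebraMap_add_mul hrank x
  have hrs : r ≠ 0 ∨ s ≠ 0 := by
    by_contra! h
    simp [h] at hx
  obtain ⟨t, ⟨b, rfl, rfl⟩ | ⟨a, rfl, rfl⟩⟩ := Padic.exists_units_mul_eq hrs
  · exact .inl ⟨b, t, 1, .one, by simp [← algebraMap_padicInt_eq]; ring⟩
  · exact .inr ⟨a, t, 1, .one, by simp [← algebraMap_padicInt_eq]; ring⟩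

theorem Ramified.inCoset_one_add_mul_theta_iff (hE : Ramified p E θ) (hθ : IsIntBasis p E θ)
    {b b' : ℤ_[p]} :
    InCoset p E i (1 + algebraMap ℤ_[p] E b * θ) (1 + algebraMap ℤ_[p] E b' * θ) ↔
      (p : ℤ_[p]) ^ i ∣ b - b' := by
  constructor
  · intro h
    rw [dvd_sub_comm]
    simpa using hθ.pow_dvd_det_of_inCoset (r := 1) (s := b) (r' := 1) (s' := b')
      (by simpa using hE.isIntegralUnit_one_add_mul_theta b) (by simpa using h)
  · rintro ⟨c, hc⟩
    refine inCoset_of_eq_add (hE.isIntegralUnit_one_add_mul_theta b)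
      (hE.isIntegralUnit_one_add_mul_theta b') (mul_mem ((𝒪).algebraMap_mem (-c)) hE.2.1) ?_
    obtain rfl : b' = b - p ^ i * c := by rw [← hc]; ring
    simp only [map_sub, map_mul, map_pow, map_natCast, map_neg]
    ring

theorem Ramified.inCoset_mul_add_theta_iff (hE : Ramified p E θ) (hθ : IsIntBasis p E θ)
    {a a' : ℤ_[p]} :
    InCoset p E i (algebraMap ℤ_[p] E a * p + θ) (algebraMap ℤ_[p] E a' * p + θ) ↔
      (p : ℤ_[p]) ^ i ∣ a - a' := by
  obtain ⟨u₁, u₂, hu₁, hθu⟩ := hE.exists_theta_sq_eq hθ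
  have hm (a : ℤ_[p]) := hE.isIntegralUnit_add_mul_theta (isIntegralUnit_algebraMap (E := E) hu₁)
    ((𝒪).algebraMap_mem (u₂ + a))
  rw [← inCoset_mul_right_iff hθ.theta_ne_zero, mul_add_theta_mul_theta hθu,
    mul_add_theta_mul_theta hθu, inCoset_mul_right_iff prime_natCast_ne_zero]
  constructor
  · intro h
    have hdet := hθ.pow_dvd_det_of_inCoset (hm a) h
    rw [dvd_sub_comm, ← hu₁.dvd_mul_left]
    convert hdet using 1
    ring
  · rintro ⟨c, hc⟩
    refine inCoset_of_eq_add (hm a) (hm a') (mul_mem ((𝒪).algebraMap_mem (-c)) hE.2.1) ?_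
    obtain rfl : a' = a - p ^ i * c := by rw [← hc]; ring
    simp only [map_add, map_sub, map_mul, map_pow, map_natCast, map_neg]
    ring

theorem Ramified.not_inCoset_one_add_mul_theta_mul_add_theta (hE : Ramified p E θ)
    (hθ : IsIntBasis p E θ) (a b : ℤ_[p]) :
    ¬ InCoset p E i (1 + algebraMap ℤ_[p] E b * θ) (algebraMap ℤ_[p] E a * p + θ) := by
  obtain ⟨u₁, u₂, hu₁, hθu⟩ := hE.exists_theta_sq_eq hθ
  intro h
  have hθ' := h.mul_right θ
  rw [mul_add_theta_mul_theta hθu] at hθ'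
  exact hE.not_inCoset_mul_theta_mul_natCast (hE.isIntegralUnit_one_add_mul_theta b)
    (hE.isIntegralUnit_add_mul_theta (isIntegralUnit_algebraMap hu₁) ((𝒪).algebraMap_mem _)) hθ'

end Tower

end ArakawaQuad

/-- **Double coset decomposition `ℚ_p^× \ E^× / 𝒪_{E,i}^×`** (Section 3.2(3),
ramified prime case). Let `E/ℚ_p` be a ramified quadratic extension with maximal
ideal `𝔭 = θ𝒪_E`, `𝔭² = p𝒪_E`, and `{1, θ}` a `ℤ_p`-basis of `𝒪_E`. For `i ≥ 0`,
every `x ∈ E^×` lies in the double coset `ℚ_p^× y 𝒪_{E,i}^×` for exactly one `y` of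
the list: `y = 1+bθ` with `b` over representatives of `ℤ_p/p^i ℤ_p`, or `y = ap+θ`
with `a` over representatives of `ℤ_p/p^i ℤ_p` (the double coset of `y` depending
only on the class of `b`, respectively `a`). -/
theorem double_coset_ramified (p : ℕ) [Fact p.Prime]
    (E : Type*) [Field E] [Algebra ℚ_[p] E] [Algebra ℤ_[p] E]
    [IsScalarTower ℤ_[p] ℚ_[p] E]
    (θ : E) (hE : Ramified p E θ) (hθ : IsIntBasis p E θ) (i : ℕ) :
    (∀ b b' : ℤ_[p], (p : ℤ_[p]) ^ i ∣ (b - b') →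
      ∀ x : E, InCoset p E i (1 + algebraMap ℤ_[p] E b * θ) x ↔
        InCoset p E i (1 + algebraMap ℤ_[p] E b' * θ) x) ∧
    (∀ a a' : ℤ_[p], (p : ℤ_[p]) ^ i ∣ (a - a') →
      ∀ x : E, InCoset p E i (algebraMap ℤ_[p] E a * (p : E) + θ) x ↔
        InCoset p E i (algebraMap ℤ_[p] E a' * (p : E) + θ) x) ∧
    (∀ x : E, x ≠ 0 →
      ((∃ b : ℤ_[p], InCoset p E i (1 + algebraMap ℤ_[p] E b * θ) x) ∨
        (∃ a : ℤ_[p], InCoset p E i (algebraMap ℤ_[p] E a * (p : E) + θ) x)) ∧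
      (∀ b b' : ℤ_[p], InCoset p E i (1 + algebraMap ℤ_[p] E b * θ) x →
        InCoset p E i (1 + algebraMap ℤ_[p] E b' * θ) x → (p : ℤ_[p]) ^ i ∣ (b - b')) ∧
      (∀ a a' : ℤ_[p], InCoset p E i (algebraMap ℤ_[p] E a * (p : E) + θ) x →
        InCoset p E i (algebraMap ℤ_[p] E a' * (p : E) + θ) x →
        (p : ℤ_[p]) ^ i ∣ (a - a')) ∧
      (∀ b a : ℤ_[p], InCoset p E i (1 + algebraMap ℤ_[p] E b * θ) x →
        ¬ InCoset p E i (algebraMap ℤ_[p] E a * (p : E) + θ) x)) := by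
  refine ⟨fun b b' h x => ((hE.inCoset_one_add_mul_theta_iff hθ).mpr h).iff_of_inCoset,
    fun a a' h x => ((hE.inCoset_mul_add_theta_iff hθ).mpr h).iff_of_inCoset,
    fun x hx => ⟨hθ.exists_inCoset hE.1 hx, ?_, ?_, ?_⟩⟩
  · exact fun b b' h h' => (hE.inCoset_one_add_mul_theta_iff hθ).mp (h.trans h'.symm)
  · exact fun a a' h h' => (hE.inCoset_mul_add_theta_iff hθ).mp (h.trans h'.symm)
  · exact fun b a h h' => hE.not_inCoset_one_add_mul_theta_mul_add_theta hθ a b (h.trans h'.symm)
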